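/- (Appendix, first part: the intended stage relations form a fixed point of the stage-axiom operator.) Let G : (Set (α × α))⁵ → (Set (α × α))⁵ be the operator mapping a quintuple R = (R≺, R⪯, R⊀, R⋠, R◁) to the quintuple with components G(R)≺ = {(a,b) | ∃ c, (a,c) ∈ R⪯ ∧ (c,b) ∈ R◁}; G(R)⪯ = {(a,b) | a ∈ F {c | (c,b) ∈ R≺}}; G(R)⊀ = {(a,b) | b ∈ F ∅ ∨ (∃ c, (a,c) ∈ R⋠ ∧ (c,b) ∈ R◁) ∨ F ∅ = ∅}; G(R)⋠ = {(a,b) | a ∉ F {c | (c,b) ∉ R⊀}}; G(R)◁ = {(a,b) | a ∈ F {c | (c,a) ∈ R≺} ∧ b ∉ F {c | (c,a) ∉ R⊀} ∧ (b ∈ F {c | (c,a) ∈ R⪯} ∨ ∀ c, c ∈ F {c' | (c',a) ∉ R⋠} → c ∈ F {c' | (c',a) ∈ R≺})}. Let I be the intended quintuple: I≺ = {(a,b) | stage(a) < stage(b)}, I⪯ = {(a,b) | stage(a) ≤ stage(b) ∧ stage(a) ≤ f}, I⊀ = {(a,b) | stage(a) ≥ stage(b)}, I⋠ = {(a,b)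 | stage(a) > stage(b) ∨ stage(a) = f + 1}, I◁ = {(a,b) | stage(a) + 1 = stage(b)}. Then G(I) = I. -/

import Mathlib

/-! For `k ≥ 1` the atoms of stage `< k` are exactly `F^[k - 1] ∅`, so `F` maps them to
`F^[k] ∅`, the atoms of stage `≤ k` in the fixed point. Every set to which `G` applies `F` at
the intended quintuple is such a level set, so each component of `G F (I F f)` reduces to a
comparison of stages. The existential components (`≺`, `⊀`) need a witness of a prescribed
stage: by minimality of `f` the chain `F^[j] ∅` grows strictly up to `j = f`, so every stage
`1, …, f` is inhabited. -/

/- The stage of an atom `a` under the staged fixed-point computation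
(Algorithm 2): the least `l` with `a ∈ F^[l] ∅` if `a` belongs to the
fixed point `F^[f] ∅`, and `f + 1` otherwise. -/
open Classical in
noncomputable def stage {α : Type*} (F : Set α → Set α) (f : ℕ) (a : α) : ℕ :=
  if a ∈ F^[f] (∅ : Set α) then sInf {l : ℕ | a ∈ F^[l] (∅ : Set α)} else f + 1

/- A quintuple of binary relations on `α`, in the order
(≺ strictly-before, ⪯ before, ⊀ not-strictly-before, ⋠ not-before,
◁ immediately-before). -/
abbrev Quint (α : Type*) :=
  Set (α × α) × Set (α × α) × Set (α × α) × Set (α × α) × Set (α × α)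

namespace Quint

variable {α : Type*}

def lt (R : Quint α) : Set (α × α) := R.1
def le (R : Quint α) : Set (α × α) := R.2.1
def nlt (R : Quint α) : Set (α × α) := R.2.2.1
def nle (R : Quint α) : Set (α × α) := R.2.2.2.1
def imm (R : Quint α) : Set (α × α) := R.2.2.2.2

end Quint

/- The semantic stage-axiom operator (equations (1)–(5) of the paper). -/
def G {α : Type*} (F : Set α → Set α) (R : Quint α) : Quint α :=
  ({p : α × α | ∃ c : α, (p.1, c) ∈ R.le ∧ (c, p.2) ∈ R.imm},
   {p : α × α | p.1 ∈ F {c : α | (c, p.2) ∈ R.lt}},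
   {p : α × α | p.2 ∈ F ∅ ∨
      (∃ c : α, (p.1, c) ∈ R.nle ∧ (c, p.2) ∈ R.imm) ∨ F ∅ = ∅},
   {p : α × α | p.1 ∉ F {c : α | (c, p.2) ∉ R.nlt}},
   {p : α × α | p.1 ∈ F {c : α | (c, p.1) ∈ R.lt} ∧
      p.2 ∉ F {c : α | (c, p.1) ∉ R.nlt} ∧
      (p.2 ∈ F {c : α | (c, p.1) ∈ R.le} ∨
        ∀ c : α, c ∈ F {c' : α | (c', p.1) ∉ R.nle} →
          c ∈ F {c' : α | (c', p.1) ∈ R.lt})})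

/- The intended quintuple of stage-ordering relations. -/
noncomputable def I {α : Type*} (F : Set α → Set α) (f : ℕ) : Quint α :=
  ({p : α × α | stage F f p.1 < stage F f p.2},
   {p : α × α | stage F f p.1 ≤ stage F f p.2 ∧ stage F f p.1 ≤ f},
   {p : α × α | stage F f p.1 ≥ stage F f p.2},
   {p : α × α | stage F f p.1 > stage F f p.2 ∨ stage F f p.1 = f + 1},
   {p : α × α | stage F f p.1 + 1 = stage F f p.2})

theorem Quint.ext {α : Type*} {R S : Quint α} (hlt : R.lt = S.lt) (hle : R.le = S.le)
    (hnlt : R.nlt = S.nlt) (hnle : R.nle = S.nle) (himm : R.imm = S.imm) : R = S :=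
  Prod.ext hlt <| Prod.ext hle <| Prod.ext hnlt <| Prod.ext hnle himm

theorem Function.iterate_eq_of_le {β : Type*} {g : β → β} {x : β} {n l : ℕ}
    (h : g^[n + 1] x = g^[n] x) (hl : n ≤ l) : g^[l] x = g^[n] x := by
  have hfix : g (g^[n] x) = g^[n] x := by rwa [← Function.iterate_succ_apply' g n]
  rw [← Nat.sub_add_cancel hl, Function.iterate_add_apply, Function.iterate_fixed hfix]

section Stage

variable {α : Type*} {F : Set α → Set α} {f : ℕ}

variable (F f) in
theorem stage_le_succ (a : α) : stage F f a ≤ f + 1 := by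
  unfold stage
  split_ifs with h
  · exact (Nat.sInf_le h).trans f.le_succ
  · rfl

theorem stage_ne_succ_iff (a : α) : stage F f a ≠ f + 1 ↔ stage F f a ≤ f := by
  have := stage_le_succ F f a
  omega

theorem stage_le_iff_mem (a : α) : stage F f a ≤ f ↔ a ∈ F^[f] ∅ := by
  unfold stage
  split_ifs with h
  · exact iff_of_true (Nat.sInf_le h) h
  · exact iff_of_false (by omega) h

theorem mem_iterate_stage {a : α} (h : a ∈ F^[f] ∅) : a ∈ F^[stage F f a] ∅ := by
  rw [stage, if_pos h]
  exact Nat.sInf_mem (s := {l | a ∈ F^[l] ∅}) ⟨f, h⟩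

variable (F f) in
theorem one_le_stage (a : α) : 1 ≤ stage F f a := by
  by_cases h : a ∈ F^[f] ∅
  · refine Nat.one_le_iff_ne_zero.mpr fun h0 => ?_
    simpa [h0] using mem_iterate_stage h
  · rw [stage, if_neg h]
    omega

theorem mem_iterate_empty_iff (hF : Monotone F) (hf : F^[f + 1] ∅ = F^[f] ∅) (a : α) (l : ℕ) :
    a ∈ F^[l] ∅ ↔ stage F f a ≤ l ∧ stage F f a ≤ f := by
  have hmono : Monotone fun j => F^[j] ∅ := hF.monotone_iterate_of_le_map (Set.empty_subset _)
  constructor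
  · intro h
    have haf : a ∈ F^[f] ∅ := by
      rcases le_total l f with hlf | hfl
      · exact hmono hlf h
      · rwa [Function.iterate_eq_of_le hf hfl] at h
    refine ⟨?_, (stage_le_iff_mem a).mpr haf⟩
    rw [stage, if_pos haf]
    exact Nat.sInf_le h
  · rintro ⟨hl, haf⟩
    exact hmono hl (mem_iterate_stage ((stage_le_iff_mem a).mp haf))

theorem mem_apply_setOf_stage_lt_iff (hF : Monotone F) (hf : F^[f + 1] ∅ = F^[f] ∅) (a b : α) :
    a ∈ F {c | stage F f c < stage F f b} ↔ stage F f a ≤ stage F f b ∧ stage F f a ≤ f := by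
  have hb := one_le_stage F f b
  have hset : {c | stage F f c < stage F f b} = F^[stage F f b - 1] ∅ := by
    ext c
    rw [Set.mem_ofPred_eq, mem_iterate_empty_iff hF hf]
    have := stage_le_succ F f b
    omega
  rw [hset, ← Function.iterate_succ_apply' F, Nat.succ_eq_add_one, Nat.sub_add_cancel hb,
    mem_iterate_empty_iff hF hf]

theorem mem_apply_setOf_stage_le_iff (hF : Monotone F) (hf : F^[f + 1] ∅ = F^[f] ∅) (a b : α) :
    a ∈ F {c | stage F f c ≤ stage F f b ∧ stage F f c ≤ f} ↔
      stage F f a ≤ stage F f b + 1 ∧ stage F f a ≤ f := by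
  have hset : {c | stage F f c ≤ stage F f b ∧ stage F f c ≤ f} = F^[stage F f b] ∅ :=
    Set.ext fun c => (mem_iterate_empty_iff hF hf c _).symm
  rw [hset, ← Function.iterate_succ_apply' F, mem_iterate_empty_iff hF hf]

theorem exists_stage_eq (hF : Monotone F) (hf : F^[f + 1] ∅ = F^[f] ∅)
    (hfmin : ∀ j : ℕ, F^[j + 1] ∅ = F^[j] ∅ → f ≤ j) {k : ℕ} (hk : 1 ≤ k) (hkf : k ≤ f) :
    ∃ c : α, stage F f c = k := by
  by_contra! hne
  have hstep : F^[k - 1 + 1] ∅ = F^[k - 1] ∅ := by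
    ext c
    rw [mem_iterate_empty_iff hF hf, mem_iterate_empty_iff hF hf]
    have := hne c
    omega
  have := hfmin (k - 1) hstep
  omega

theorem apply_empty_eq_empty_iff (hf : F^[f + 1] ∅ = F^[f] ∅)
    (hfmin : ∀ j : ℕ, F^[j + 1] ∅ = F^[j] ∅ → f ≤ j) : F ∅ = ∅ ↔ f = 0 :=
  ⟨fun h => Nat.le_zero.mp (hfmin 0 h), by rintro rfl; exact hf⟩

end Stage

namespace Quint

variable {α : Type*} {F : Set α → Set α} {f : ℕ}

theorem lt_G_I (hF : Monotone F) (hf : F^[f + 1] ∅ = F^[f] ∅)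
    (hfmin : ∀ j : ℕ, F^[j + 1] ∅ = F^[j] ∅ → f ≤ j) : (G F (I F f)).lt = (I F f).lt := by
  ext ⟨a, b⟩
  simp only [G, I, lt, le, imm, Set.mem_ofPred_eq]
  have := one_le_stage F f a
  have := stage_le_succ F f b
  constructor
  · rintro ⟨c, ⟨hac, -⟩, hcb⟩
    omega
  · intro hab
    obtain ⟨c, hc⟩ := exists_stage_eq hF hf hfmin (k := stage F f b - 1) (by omega) (by omega)
    exact ⟨c, ⟨by omega, by omega⟩, by omega⟩

theorem le_G_I (hF : Monotone F) (hf : F^[f + 1] ∅ = F^[f] ∅) : (G F (I F f)).le = (I F f).le := by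
  ext ⟨a, b⟩
  exact mem_apply_setOf_stage_lt_iff hF hf a b

theorem nlt_G_I (hF : Monotone F) (hf : F^[f + 1] ∅ = F^[f] ∅)
    (hfmin : ∀ j : ℕ, F^[j + 1] ∅ = F^[j] ∅ → f ≤ j) : (G F (I F f)).nlt = (I F f).nlt := by
  ext ⟨a, b⟩
  simp only [G, I, nlt, nle, imm, Set.mem_ofPred_eq]
  rw [apply_empty_eq_empty_iff hf hfmin, show F ∅ = F^[1] ∅ from rfl, mem_iterate_empty_iff hF hf]
  have := one_le_stage F f a
  have := stage_le_succ F f a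
  have := one_le_stage F f b
  have := stage_le_succ F f b
  constructor
  · rintro (hb | ⟨c, hac, hcb⟩ | rfl) <;> omega
  · intro hba
    by_cases hb : stage F f b ≤ 1 ∧ stage F f b ≤ f
    · exact Or.inl hb
    by_cases hf0 : f = 0
    · exact Or.inr (Or.inr hf0)
    obtain ⟨c, hc⟩ := exists_stage_eq hF hf hfmin (k := stage F f b - 1) (by omega) (by omega)
    exact Or.inr (Or.inl ⟨c, by omega, by omega⟩)

theorem nle_G_I (hF : Monotone F) (hf : F^[f + 1] ∅ = F^[f] ∅) :
    (G F (I F f)).nle = (I F f).nle := by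
  ext ⟨a, b⟩
  simp only [G, I, nlt, nle, Set.mem_ofPred_eq, ge_iff_le, not_le,
    mem_apply_setOf_stage_lt_iff hF hf]
  have := stage_le_succ F f a
  omega

theorem imm_G_I (hF : Monotone F) (hf : F^[f + 1] ∅ = F^[f] ∅)
    (hfmin : ∀ j : ℕ, F^[j + 1] ∅ = F^[j] ∅ → f ≤ j) : (G F (I F f)).imm = (I F f).imm := by
  ext ⟨a, b⟩
  simp only [G, I, lt, le, nlt, nle, imm, Set.mem_ofPred_eq, ge_iff_le, gt_iff_lt, not_le,
    not_lt, not_or, stage_ne_succ_iff, mem_apply_setOf_stage_lt_iff hF hf,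
    mem_apply_setOf_stage_le_iff hF hf]
  have := stage_le_succ F f b
  constructor
  · rintro ⟨⟨-, ha⟩, hb, hab | hall⟩
    · omega
    · by_cases haf : stage F f a < f
      · obtain ⟨c, hc⟩ := exists_stage_eq hF hf hfmin (k := stage F f a + 1) (by omega) haf
        have := hall c
        omega
      · omega
  · intro hab
    refine ⟨⟨le_rfl, by omega⟩, by omega, ?_⟩
    by_cases hbf : stage F f b ≤ f
    · exact Or.inl ⟨by omega, hbf⟩
    · exact Or.inr fun c _ => by omega

end Quint

theorem intended_relations_are_fixed_point_general
    {α : Type*} (F : Set α → Set α) (hF : Monotone F)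
    (f : ℕ) (hf : F^[f + 1] ∅ = F^[f] ∅)
    (hfmin : ∀ j : ℕ, F^[j + 1] ∅ = F^[j] ∅ → f ≤ j) :
    G F (I F f) = I F f :=
  Quint.ext (Quint.lt_G_I hF hf hfmin) (Quint.le_G_I hF hf) (Quint.nlt_G_I hF hf hfmin)
    (Quint.nle_G_I hF hf) (Quint.imm_G_I hF hf hfmin)

theorem intended_relations_are_fixed_point
    {α : Type*} [Fintype α] (F : Set α → Set α) (hF : Monotone F)
    (f : ℕ) (hf : F^[f + 1] ∅ = F^[f] ∅)
    (hfmin : ∀ j : ℕ, F^[j + 1] ∅ = F^[j] ∅ → f ≤ j) :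
    G F (I F f) = I F f :=
  intended_relations_are_fixed_point_general F hF f hf hfmin
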